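/- Let n, ℓ₂, w₁, w₂ be integers with ℓ₂, w₁, w₂ positive, and let r, s be integers with r·ℓ₂ − s·w₁·w₂ = 1. Define g(x₁,x₂) = (x₁^{r(1−s·w₁·w₂)}·x₂^{s·w₁²}, x₁^{−s·w₂²}·x₂^{ℓ₂}) for nonzero complex x₁, x₂, and write g = (g¹, g²) for its two coordinate functions. Then for every nonzero complex number v and all unit complex numbers x₁, x₂: g((v/|v|)^{−n·w₁}·x₁, (v/|v|)^{−n·r·w₂}·x₂) = ((v/|v|)^{−n·r·w₁}·g¹(x₁,x₂), (v/|v|)^{−n·w₂}·g²(x₁,x₂)). (This is the compatibility of the gluing data for the bundles B₁∩B₂ and B₂ over the surface.) -/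

import Mathlib

/-! A Laurent monomial `x^k y^m` is equivariant for the torus action `(x, y) ↦ (u^a x, u^b y)`,
with weight `a k + b m`; the gluing map is a pair of such monomials, and the relation
`r ℓ₂ - s w₁ w₂ = 1` makes its weight matrix carry `(-n w₁, -n r w₂)` to `(-n r w₁, -n w₂)`. -/

noncomputable def gmap (ℓ₂ r s w₁ w₂ : ℤ) (p : ℂ × ℂ) : ℂ × ℂ :=
  (p.1 ^ (r * (1 - s * w₁ * w₂)) * p.2 ^ (s * w₁ ^ 2),
   p.1 ^ (-(s * w₂ ^ 2)) * p.2 ^ ℓ₂)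

theorem zpow_mul_mul_zpow_mul {G : Type*} [CommGroupWithZero G] {u : G} (hu : u ≠ 0)
    (x y : G) (a b k m : ℤ) :
    (u ^ a * x) ^ k * (u ^ b * y) ^ m = u ^ (a * k + b * m) * (x ^ k * y ^ m) := by
  rw [mul_zpow, mul_zpow, ← zpow_mul, ← zpow_mul, mul_mul_mul_comm, zpow_add₀ hu]

theorem gmap_zpow_mul {u : ℂ} (hu : u ≠ 0) (ℓ₂ r s w₁ w₂ a b : ℤ) (x₁ x₂ : ℂ) :
    gmap ℓ₂ r s w₁ w₂ (u ^ a * x₁, u ^ b * x₂) =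
      (u ^ (a * (r * (1 - s * w₁ * w₂)) + b * (s * w₁ ^ 2)) * (gmap ℓ₂ r s w₁ w₂ (x₁, x₂)).1,
       u ^ (a * -(s * w₂ ^ 2) + b * ℓ₂) * (gmap ℓ₂ r s w₁ w₂ (x₁, x₂)).2) := by
  simp only [gmap, zpow_mul_mul_zpow_mul hu]

theorem gluing_compatibility_general (n ℓ₂ w₁ w₂ : ℤ)
    (r s : ℤ) (hrs : r * ℓ₂ - s * w₁ * w₂ = 1)
    (v : ℂ) (hv : v ≠ 0)
    (x₁ x₂ : ℂ) :
    gmap ℓ₂ r s w₁ w₂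
      ((v / (‖v‖ : ℂ)) ^ (-(n * w₁)) * x₁,
       (v / (‖v‖ : ℂ)) ^ (-(n * r * w₂)) * x₂) =
      ((v / (‖v‖ : ℂ)) ^ (-(n * r * w₁)) * (gmap ℓ₂ r s w₁ w₂ (x₁, x₂)).1,
       (v / (‖v‖ : ℂ)) ^ (-(n * w₂)) * (gmap ℓ₂ r s w₁ w₂ (x₁, x₂)).2) := by
  have hu : v / (‖v‖ : ℂ) ≠ 0 := div_ne_zero hv (by exact_mod_cast norm_ne_zero_iff.mpr hv)
  have hweight₁ : -(n * w₁) * (r * (1 - s * w₁ * w₂)) + -(n * r * w₂) * (s * w₁ ^ 2)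
      = -(n * r * w₁) := by ring
  have hweight₂ : -(n * w₁) * -(s * w₂ ^ 2) + -(n * r * w₂) * ℓ₂ = -(n * w₂) := by
    linear_combination (-(n * w₂)) * hrs
  rw [gmap_zpow_mul hu, hweight₁, hweight₂]

/-- Compatibility of the gluing data for the bundles `B₁ ∩ B₂` and `B₂`: with
`u = v/|v|` one has `g(u^{−n·w₁}·x₁, u^{−n·r·w₂}·x₂) = (u^{−n·r·w₁}·g¹(x₁,x₂), u^{−n·w₂}·g²(x₁,x₂))`. -/
theorem gluing_compatibility (n ℓ₂ w₁ w₂ : ℤ) (hℓ₂ : 0 < ℓ₂) (hw₁ : 0 < w₁) (hw₂ : 0 < w₂)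
    (r s : ℤ) (hrs : r * ℓ₂ - s * w₁ * w₂ = 1)
    (v : ℂ) (hv : v ≠ 0)
    (x₁ x₂ : ℂ) (hx₁ : ‖x₁‖ = 1) (hx₂ : ‖x₂‖ = 1) :
    gmap ℓ₂ r s w₁ w₂
      ((v / (‖v‖ : ℂ)) ^ (-(n * w₁)) * x₁,
       (v / (‖v‖ : ℂ)) ^ (-(n * r * w₂)) * x₂) =
      ((v / (‖v‖ : ℂ)) ^ (-(n * r * w₁)) * (gmap ℓ₂ r s w₁ w₂ (x₁, x₂)).1,
       (v / (‖v‖ : ℂ)) ^ (-(n * w₂)) * (gmap ℓ₂ r s w₁ w₂ (x₁, x₂)).2) :=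
  gluing_compatibility_general n ℓ₂ w₁ w₂ r s hrs v hv x₁ x₂
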